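/- (Simultaneous coverage of CAFHT with additive scores.) Suppose trajectories Y^(1), ..., Y^(n+1), each a sequence (Y_0, ..., Y_T) of real values, are exchangeable. For each i, let [ℓ_t(Y^(i)), u_t(Y^(i))] for t = 1,...,T be intervals constructed by a fixed measurable online rule (the interval at time t depends only on Y_0^(i),...,Y_{t-1}^(i) and fixed auxiliary data independent of the n+1 trajectories). Define the score ε_i = max_{t∈[T]} max( [ℓ_t(Y^(i)) - Y_t^(i)]_+, [Y_t^(i) - u_t(Y^(i))]_+ ), and let Q̂ be the ⌈(1-α)(n+1)⌉-th smallest of ε_1,...,ε_n. Then P( for all t ∈ [T], Y_t^(n+1) ∈ [ℓ_t(Y^(n+1)) - Q̂, u_t(Y^(n+1)) + Q̂] ) ≥ 1-α. -/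

import Mathlib

open MeasureTheory Finset
open scoped ENNReal NNReal

/-- The `k`-th smallest value (1-indexed) of a list of reals, as an extended real,
equal to `⊤` if `k` exceeds the length of the list. -/
noncomputable def kthSmallestE (l : List ℝ) (k : ℕ) : EReal :=
  ((l.insertionSort (· ≤ ·)).map (fun x : ℝ => (x : EReal))).getD (k - 1) ⊤

/-- The additive CAFHT conformity score of a trajectory `y = (y_0, ..., y_T)`:
`max_{t ∈ [T]} max([ℓ_t(y) - y_t]_+, [y_t - u_t(y)]_+)`, where the interval for
time `t+1` (for `t : Fin T`) is `[L y t, U y t]`. -/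
noncomputable def addScore {T : ℕ} (hT : 0 < T)
    (L U : (Fin (T + 1) → ℝ) → Fin T → ℝ) (y : Fin (T + 1) → ℝ) : ℝ :=
  Finset.univ.sup' (Finset.univ_nonempty_iff.mpr ⟨⟨0, hT⟩⟩)
    (fun t : Fin T => max (max (L y t - y t.succ) 0) (max (y t.succ - U y t) 0))

section Aux

lemma sorted_get_le_iff (s : List ℝ) (hs : s.Pairwise (· ≤ ·)) (j : ℕ) (hj : j < s.length) (x : ℝ) :
    x ≤ s.get ⟨j, hj⟩ ↔ s.countP (fun y => y < x) ≤ j := by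
  have hmono : ∀ (a b : Fin s.length), a ≤ b → s.get a ≤ s.get b := by
    intro a b hab
    rcases eq_or_lt_of_le hab with h | h
    · rw [h]
    · exact (List.pairwise_iff_get.mp hs) a b h
  have hsplit : s.countP (fun y => y < x) =
      (s.take j).countP (fun y => y < x) + (s.drop j).countP (fun y => y < x) := by
    conv_lhs => rw [← List.take_append_drop j s]
    rw [List.countP_append]
  constructor
  · intro hx
    have hld : (s.drop j).length = s.length - j := List.length_drop
    have hdrop : (s.drop j).countP (fun y => y < x) = 0 := by
      rw [List.countP_eq_zero]
      intro a ha
      rcases List.mem_iff_getElem.mp ha with ⟨i, hi, hieq⟩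
      simp only [decide_eq_true_eq, not_lt]
      have hji : j + i < s.length := by omega
      rw [← hieq, ← List.getElem_drop' hji]
      calc x ≤ s.get ⟨j, hj⟩ := hx
        _ ≤ s.get ⟨j + i, hji⟩ := hmono _ _ (by simp [Fin.le_def])
        _ = s[j + i] := rfl
    have htake : (s.take j).countP (fun y => y < x) ≤ j := by
      calc (s.take j).countP (fun y => y < x) ≤ (s.take j).length := List.countP_le_length
        _ ≤ j := by rw [List.length_take]; omega
    omega
  · intro hc
    by_contra hx
    push_neg at hx
    have hlen : (s.take (j+1)).length = j + 1 := by rw [List.length_take]; omega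
    have htake : (s.take (j + 1)).countP (fun y => y < x) = (s.take (j+1)).length := by
      rw [List.countP_eq_length]
      intro a ha
      rcases List.mem_iff_getElem.mp ha with ⟨i, hi, hieq⟩
      simp only [decide_eq_true_eq]
      have hi' : i < s.length := by omega
      rw [← hieq, List.getElem_take]
      calc s[i] = s.get ⟨i, hi'⟩ := rfl
        _ ≤ s.get ⟨j, hj⟩ := hmono _ _ (by simp only [Fin.mk_le_mk]; rw [hlen] at hi; omega)
        _ < x := hx
    have hsub : (s.take (j+1)).countP (fun y => y < x) ≤ s.countP (fun y => y < x) :=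
      (List.take_sublist _ _).countP_le
    omega

lemma length_isort (l : List ℝ) : (l.insertionSort (· ≤ ·)).length = l.length :=
  (l.perm_insertionSort (· ≤ ·)).length_eq

lemma kthSmallestE_eq_get (l : List ℝ) (k : ℕ) (hk1 : 1 ≤ k) (hkl : k ≤ l.length) :
    kthSmallestE l k =
      (((l.insertionSort (· ≤ ·)).get ⟨k - 1, by rw [length_isort]; omega⟩ : ℝ) : EReal) := by
  unfold kthSmallestE
  have h : k - 1 < ((l.insertionSort (· ≤ ·)).map (fun x : ℝ => (x : EReal))).length := by
    rw [List.length_map, length_isort]; omega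
  rw [List.getD_eq_getElem _ _ h, List.getElem_map]; rfl

lemma kthSmallestE_top (l : List ℝ) (k : ℕ) (h : l.length < k) : kthSmallestE l k = ⊤ := by
  unfold kthSmallestE
  apply List.getD_eq_default
  rw [List.length_map, length_isort]; omega

lemma kthSmallestE_mem (l : List ℝ) (k : ℕ) (hk1 : 1 ≤ k) (hkl : k ≤ l.length) :
    ∃ q ∈ l, kthSmallestE l k = (q : EReal) := by
  refine ⟨_, ?_, kthSmallestE_eq_get l k hk1 hkl⟩
  exact (l.perm_insertionSort (· ≤ ·)).mem_iff.mp (List.get_mem _ _)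

lemma le_kthSmallestE_iff (l : List ℝ) (k : ℕ) (hk1 : 1 ≤ k) (hkl : k ≤ l.length) (x : ℝ) :
    (x : EReal) ≤ kthSmallestE l k ↔ l.countP (fun y => y < x) ≤ k - 1 := by
  rw [kthSmallestE_eq_get l k hk1 hkl, EReal.coe_le_coe_iff,
    sorted_get_le_iff _ (List.pairwise_insertionSort _ _) (k - 1) _ x,
    (l.perm_insertionSort (· ≤ ·)).countP_eq]

lemma card_filter_comp_perm {m : ℕ} (σ : Equiv.Perm (Fin m)) (p : Fin m → Prop) [DecidablePred p] :
    #(univ.filter (fun i => p (σ i))) = #(univ.filter p) := by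
  apply Finset.card_bij (fun i _ => σ i)
  · intro a ha; simp only [mem_filter, mem_univ, true_and] at ha ⊢; exact ha
  · intro a _ b _ hab; exact σ.injective hab
  · intro b hb
    refine ⟨σ.symm b, ?_, by simp⟩
    simp only [mem_filter, mem_univ, true_and, Equiv.apply_symm_apply] at hb ⊢
    exact hb

lemma rank_claim {m k : ℕ} (v : Fin m → ℝ) (hk : k ≤ m) :
    k ≤ #(univ.filter (fun j => #(univ.filter (fun i => v i < v j)) ≤ k - 1)) := by
  rcases Nat.eq_zero_or_pos k with rfl | hk1
  · simp
  set σ := Tuple.sort v with hσ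
  have hmono := Tuple.monotone_sort v
  have hsub : ∀ p : Fin k, σ (Fin.castLE hk p) ∈
      univ.filter (fun j => #(univ.filter (fun i => v i < v j)) ≤ k - 1) := by
    intro p
    simp only [mem_filter, mem_univ, true_and]
    set q0 : Fin m := Fin.castLE hk p with hq0
    calc #(univ.filter (fun i => v i < v (σ q0)))
        = #(univ.filter (fun q => v (σ q) < v (σ q0))) :=
          (card_filter_comp_perm σ (fun i => v i < v (σ q0))).symm
      _ ≤ #(univ.filter (fun q => q < q0)) := by
          apply Finset.card_le_card
          intro q hq
          simp only [mem_filter, mem_univ, true_and] at hq ⊢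
          by_contra hle
          push_neg at hle
          exact absurd (hmono hle) (not_le.mpr hq)
      _ = (q0 : ℕ) := by rw [← Fin.card_Iio q0]; congr 1; ext i; simp
      _ ≤ k - 1 := by have := p.isLt; simp only [hq0, Fin.coe_castLE]; omega
  calc k = #(univ : Finset (Fin k)) := by simp
    _ ≤ _ := Finset.card_le_card_of_injOn (fun p => σ (Fin.castLE hk p))
        (fun p _ => hsub p)
        (fun a _ b _ hab => Fin.castLE_injective hk (σ.injective hab))

lemma countP_ofFn {n : ℕ} (f : Fin n → ℝ) (p : ℝ → Prop) [DecidablePred p] :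
    (List.ofFn f).countP (fun y => p y) = #(univ.filter (fun i => p (f i))) := by
  rw [List.ofFn_eq_map, List.countP_map, Finset.card, Finset.filter_val, Fin.univ_def,
    Multiset.filter_coe, Multiset.coe_card, List.countP_eq_length_filter]
  congr 1

lemma card_filter_castSucc {n : ℕ} (p : Fin (n + 1) → Prop) [DecidablePred p]
    (hlast : ¬ p (Fin.last n)) :
    #(univ.filter p) = #(univ.filter (fun i : Fin n => p i.castSucc)) := by
  apply Finset.card_bij' (fun (i : Fin (n+1)) (hi : i ∈ univ.filter p) =>
      i.castPred (by
        intro h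
        rw [mem_filter] at hi
        exact hlast (h ▸ hi.2)))
    (fun (i : Fin n) _ => i.castSucc) ?hi ?hj ?left ?right
  case hi =>
    intro a ha
    simp only [mem_filter, mem_univ, true_and] at ha ⊢
    rw [Fin.castSucc_castPred]
    exact ha
  case hj =>
    intro a ha
    simp only [mem_filter, mem_univ, true_and] at ha ⊢
    exact ha
  case left => intro a ha; simp
  case right => intro a ha; simp

lemma addScore_nonneg {T : ℕ} (hT : 0 < T) (L U : (Fin (T + 1) → ℝ) → Fin T → ℝ)
    (y : Fin (T + 1) → ℝ) : 0 ≤ addScore hT L U y := by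
  unfold addScore
  refine le_trans ?_ (Finset.le_sup' _ (Finset.mem_univ ⟨0, hT⟩))
  exact le_trans (le_max_right _ 0) (le_max_left _ _)

lemma addScore_le_iff {T : ℕ} (hT : 0 < T) (L U : (Fin (T + 1) → ℝ) → Fin T → ℝ)
    (y : Fin (T + 1) → ℝ) (q : ℝ) (hq : 0 ≤ q) :
    addScore hT L U y ≤ q ↔ ∀ t : Fin T, L y t - q ≤ y t.succ ∧ y t.succ ≤ U y t + q := by
  unfold addScore
  rw [Finset.sup'_le_iff]
  constructor
  · intro h t
    have := h t (Finset.mem_univ t)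
    rw [max_le_iff, max_le_iff, max_le_iff] at this
    constructor <;> linarith [this.1.1, this.2.1]
  · intro h t _
    rw [max_le_iff, max_le_iff, max_le_iff]
    have := h t
    refine ⟨⟨by linarith [this.1], hq⟩, by linarith [this.2], hq⟩

lemma addScore_measurable {T : ℕ} (hT : 0 < T) (L U : (Fin (T + 1) → ℝ) → Fin T → ℝ)
    (hLmeas : Measurable L) (hUmeas : Measurable U) :
    Measurable (addScore hT L U) := by
  have key : ∀ t : Fin T, Measurable (fun y : Fin (T+1) → ℝ =>
      max (max (L y t - y t.succ) 0) (max (y t.succ - U y t) 0)) := by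
    intro t
    have hL : Measurable fun y : Fin (T+1) → ℝ => L y t := (measurable_pi_apply t).comp hLmeas
    have hU : Measurable fun y : Fin (T+1) → ℝ => U y t := (measurable_pi_apply t).comp hUmeas
    have hy : Measurable fun y : Fin (T+1) → ℝ => y t.succ := measurable_pi_apply _
    exact ((hL.sub hy).max measurable_const).max ((hy.sub hU).max measurable_const)
  have := measurable_sup' (Finset.univ_nonempty_iff.mpr ⟨(⟨0, hT⟩ : Fin T)⟩)
    (f := fun t : Fin T => fun y : Fin (T+1) → ℝ =>
      max (max (L y t - y t.succ) 0) (max (y t.succ - U y t) 0)) (fun t _ => key t)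
  convert this using 1
  funext y
  rw [Finset.sup'_apply]
  rfl

end Aux

theorem stmt2 {Ω : Type*} [MeasurableSpace Ω] (μ : Measure Ω) [IsProbabilityMeasure μ]
    (n T : ℕ) (hn : 0 < n) (hT : 0 < T) (α : ℝ) (hα : α ∈ Set.Ioo (0 : ℝ) 1)
    (Y : Ω → Fin (n + 1) → (Fin (T + 1) → ℝ)) (hYmeas : Measurable Y)
    -- exchangeability of the n+1 trajectories
    (hexch : ∀ σ : Equiv.Perm (Fin (n + 1)),
      Measure.map (fun ω i => Y ω (σ i)) μ = Measure.map Y μ)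
    -- the online interval rule: lower and upper endpoints at each time t ∈ [T]
    (L U : (Fin (T + 1) → ℝ) → Fin T → ℝ)
    (hLmeas : Measurable L) (hUmeas : Measurable U)
    -- the interval at time t+1 depends only on the past values y_0, ..., y_t
    (hpast : ∀ (y y' : Fin (T + 1) → ℝ) (t : Fin T),
      (∀ s : Fin (T + 1), (s : ℕ) ≤ (t : ℕ) → y s = y' s) → L y t = L y' t ∧ U y t = U y' t) :
    ENNReal.ofReal (1 - α) ≤
      μ {ω | ∀ t : Fin T,
        (Y ω (Fin.last n) t.succ : EReal) ∈
          Set.Icc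
            ((L (Y ω (Fin.last n)) t : EReal) -
              kthSmallestE (List.ofFn (fun i : Fin n => addScore hT L U (Y ω i.castSucc)))
                ⌈(1 - α) * (n + 1)⌉₊)
            ((U (Y ω (Fin.last n)) t : EReal) +
              kthSmallestE (List.ofFn (fun i : Fin n => addScore hT L U (Y ω i.castSucc)))
                ⌈(1 - α) * (n + 1)⌉₊)} := by
  classical
  obtain ⟨hα0, hα1⟩ := hα
  set k : ℕ := ⌈(1 - α) * (n + 1)⌉₊ with hk
  set s : (Fin (T + 1) → ℝ) → ℝ := addScore hT L U with hsdef
  have hsmeas : Measurable s := addScore_measurable hT L U hLmeas hUmeas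
  have hk1 : 1 ≤ k := by
    rw [hk]
    apply Nat.ceil_pos.mpr
    apply mul_pos (by linarith) (by positivity)
  -- main case split on whether k ≤ n
  by_cases hkn : k ≤ n
  · -- the conformal argument
    set B : Fin (n + 1) → Set (Fin (n + 1) → (Fin (T + 1) → ℝ)) :=
      fun j => {f | #(univ.filter (fun i : Fin (n + 1) => s (f i) < s (f j))) ≤ k - 1} with hB
    have hBmeas : ∀ j, MeasurableSet (B j) := by
      intro j
      have hg : Measurable (fun f : Fin (n + 1) → (Fin (T + 1) → ℝ) =>
          #(univ.filter (fun i : Fin (n + 1) => s (f i) < s (f j)))) := by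
        simp only [Finset.card_filter]
        apply Finset.measurable_sum
        intro i _
        exact Measurable.ite
          (measurableSet_lt (hsmeas.comp (measurable_pi_apply i))
            (hsmeas.comp (measurable_pi_apply j)))
          measurable_const measurable_const
      have hrfl : B j = (fun f : Fin (n + 1) → (Fin (T + 1) → ℝ) =>
          #(univ.filter (fun i : Fin (n + 1) => s (f i) < s (f j)))) ⁻¹' {m : ℕ | m ≤ k - 1} :=
        rfl
      rw [hrfl]
      exact hg MeasurableSpace.measurableSet_top
    set A : Fin (n + 1) → Set Ω := fun j => Y ⁻¹' (B j) with hA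
    have hAmeas : ∀ j, MeasurableSet (A j) := fun j => hYmeas (hBmeas j)
    -- all A j have equal measure
    have hAeq : ∀ j, μ (A j) = μ (A (Fin.last n)) := by
      intro j
      have hYσ : Measurable (fun ω i => Y ω (Equiv.swap j (Fin.last n) i)) :=
        measurable_pi_lambda _
          (fun i => (measurable_pi_apply (Equiv.swap j (Fin.last n) i)).comp hYmeas)
      have h1 : μ (A (Fin.last n)) = Measure.map Y μ (B (Fin.last n)) :=
        (Measure.map_apply hYmeas (hBmeas _)).symm
      rw [← hexch (Equiv.swap j (Fin.last n)), Measure.map_apply hYσ (hBmeas _)] at h1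
      rw [h1]
      congr 1
      ext ω
      simp only [hA, hB, Set.mem_preimage, Set.mem_setOf_eq, Equiv.swap_apply_right]
      have e1 : #(univ.filter (fun i : Fin (n + 1) =>
            s (Y ω (Equiv.swap j (Fin.last n) i)) < s (Y ω j)))
          = #(univ.filter (fun i : Fin (n + 1) => s (Y ω i) < s (Y ω j))) :=
        card_filter_comp_perm (Equiv.swap j (Fin.last n))
          (fun i => s (Y ω i) < s (Y ω j))
      rw [e1]
    -- pointwise: at least k of the events hold
    have hpt : ∀ ω, (k : ℝ≥0∞) ≤ ∑ j : Fin (n + 1), (A j).indicator (1 : Ω → ℝ≥0∞) ω := by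
      intro ω
      have hcard : k ≤ #(univ.filter (fun j : Fin (n + 1) => ω ∈ A j)) := by
        have := rank_claim (fun i : Fin (n + 1) => s (Y ω i)) (by omega : k ≤ n + 1)
        convert this using 2 with j
        simp only [hA, hB, Set.mem_preimage, Set.mem_setOf_eq]
      calc (k : ℝ≥0∞) ≤ (((univ.filter (fun j : Fin (n + 1) => ω ∈ A j)).card : ℕ) : ℝ≥0∞) := by
            exact_mod_cast hcard
        _ = ∑ j : Fin (n + 1), (A j).indicator (1 : Ω → ℝ≥0∞) ω := by
            rw [Finset.card_filter]
            push_cast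
            apply Finset.sum_congr rfl
            intro j _
            by_cases h : ω ∈ A j <;> simp [Set.indicator_apply, h]
    -- integrate
    have hsum : (k : ℝ≥0∞) ≤ ∑ j : Fin (n + 1), μ (A j) := by
      have h1 : ∑ j : Fin (n + 1), μ (A j) =
          ∫⁻ ω, ∑ j : Fin (n + 1), (A j).indicator (1 : Ω → ℝ≥0∞) ω ∂μ := by
        rw [lintegral_finset_sum _ (fun j _ => measurable_one.indicator (hAmeas j))]
        exact Finset.sum_congr rfl (fun j _ => (lintegral_indicator_one (hAmeas j)).symm)
      rw [h1]
      calc (k : ℝ≥0∞) = ∫⁻ _, (k : ℝ≥0∞) ∂μ := by simp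
        _ ≤ _ := lintegral_mono hpt
    have hconst : ∑ j : Fin (n + 1), μ (A j) = (n + 1 : ℝ≥0∞) * μ (A (Fin.last n)) := by
      rw [Finset.sum_congr rfl (fun j _ => hAeq j), Finset.sum_const, Finset.card_univ,
        Fintype.card_fin, nsmul_eq_mul]
      push_cast
      ring
    have hmain : ENNReal.ofReal (1 - α) ≤ μ (A (Fin.last n)) := by
      have hpos : (0 : ℝ≥0∞) < (n : ℝ≥0∞) + 1 := lt_of_lt_of_le zero_lt_one le_add_self
      rw [← ENNReal.mul_le_mul_iff_right (a := (n + 1 : ℝ≥0∞)) hpos.ne' (by simp)]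
      have hnn : ((n : ℝ≥0∞) + 1) = ENNReal.ofReal ((n : ℝ) + 1) := by
        rw [ENNReal.ofReal_add (by positivity) zero_le_one, ENNReal.ofReal_natCast,
          ENNReal.ofReal_one]
      calc (n + 1 : ℝ≥0∞) * ENNReal.ofReal (1 - α)
          = ENNReal.ofReal ((1 - α) * (n + 1)) := by
            rw [hnn, ← ENNReal.ofReal_mul (by positivity), mul_comm]
        _ ≤ (k : ℝ≥0∞) := by
            rw [← ENNReal.ofReal_natCast k]
            exact ENNReal.ofReal_le_ofReal (Nat.le_ceil _)
        _ ≤ (n + 1 : ℝ≥0∞) * μ (A (Fin.last n)) := by rw [← hconst]; exact hsum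
    -- identify the event with A (last)
    have hEeq : {ω | ∀ t : Fin T,
        (Y ω (Fin.last n) t.succ : EReal) ∈
          Set.Icc
            ((L (Y ω (Fin.last n)) t : EReal) -
              kthSmallestE (List.ofFn (fun i : Fin n => s (Y ω i.castSucc))) k)
            ((U (Y ω (Fin.last n)) t : EReal) +
              kthSmallestE (List.ofFn (fun i : Fin n => s (Y ω i.castSucc))) k)}
        = A (Fin.last n) := by
      ext ω
      set l : List ℝ := List.ofFn (fun i : Fin n => s (Y ω i.castSucc)) with hl
      have hlen : l.length = n := by rw [hl, List.length_ofFn]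
      have hkl : k ≤ l.length := by omega
      obtain ⟨q, hqmem, hqeq⟩ := kthSmallestE_mem l k hk1 hkl
      have hq0 : 0 ≤ q := by
        rw [hl, List.mem_ofFn] at hqmem
        obtain ⟨i, hi⟩ := hqmem
        rw [← hi]
        exact addScore_nonneg hT L U _
      simp only [Set.mem_setOf_eq, hA, hB, Set.mem_preimage]
      have step1 : (∀ t : Fin T,
          (Y ω (Fin.last n) t.succ : EReal) ∈
            Set.Icc ((L (Y ω (Fin.last n)) t : EReal) - kthSmallestE l k)
              ((U (Y ω (Fin.last n)) t : EReal) + kthSmallestE l k))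
          ↔ s (Y ω (Fin.last n)) ≤ q := by
        rw [hsdef, addScore_le_iff hT L U _ q hq0]
        apply forall_congr'
        intro t
        rw [hqeq, Set.mem_Icc, ← EReal.coe_sub, ← EReal.coe_add,
          EReal.coe_le_coe_iff, EReal.coe_le_coe_iff]
      rw [step1]
      have step2 : s (Y ω (Fin.last n)) ≤ q ↔
          l.countP (fun y => y < s (Y ω (Fin.last n))) ≤ k - 1 := by
        rw [← le_kthSmallestE_iff l k hk1 hkl, hqeq, EReal.coe_le_coe_iff]
      rw [step2, hl, countP_ofFn (fun i : Fin n => s (Y ω i.castSucc))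
        (fun y => y < s (Y ω (Fin.last n)))]
      rw [card_filter_castSucc (fun i : Fin (n+1) => s (Y ω i) < s (Y ω (Fin.last n)))
        (by simp)]
    rw [hEeq]
    exact hmain
  · -- trivial case: quantile is ⊤
    push_neg at hkn
    have hEuniv : {ω | ∀ t : Fin T,
        (Y ω (Fin.last n) t.succ : EReal) ∈
          Set.Icc
            ((L (Y ω (Fin.last n)) t : EReal) -
              kthSmallestE (List.ofFn (fun i : Fin n => s (Y ω i.castSucc))) k)
            ((U (Y ω (Fin.last n)) t : EReal) +
              kthSmallestE (List.ofFn (fun i : Fin n => s (Y ω i.castSucc))) k)}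
        = Set.univ := by
      ext ω
      simp only [Set.mem_setOf_eq, Set.mem_univ, iff_true]
      intro t
      have htop : kthSmallestE (List.ofFn (fun i : Fin n => s (Y ω i.castSucc))) k
          = ⊤ := kthSmallestE_top _ _ (by rw [List.length_ofFn]; omega)
      rw [htop, Set.mem_Icc, EReal.sub_top]
      constructor
      · exact bot_le
      · rw [show ((U (Y ω (Fin.last n)) t : EReal) + ⊤) = ⊤ by simp]
        exact le_top
    rw [hEuniv, measure_univ]
    exact ENNReal.ofReal_le_one.mpr (by linarith)
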